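/- Let (A, H) be a matched pair of quasigroupoids. Then the double cross product A ⋈ H, with objects (A⋈H)₀ = A₀, arrows (A⋈H)₁ = {(a,h) : s_A(a) = t_H(h)}, source s(a,h) = s_H(h), target t(a,h) = t_A(a), identity id(x) = (id_A(x), id_H(x)), product (a,g)·(b,h) = (a•φ_A(g,b), φ_H(g,b)⋆h) when s_H(g) = t_A(b), and inverse λ(a,h) = (φ_A(λ_H(h),λ_A(a)), φ_H(λ_H(h),λ_A(a))), is a quasigroupoid. -/

import Mathlib

/-!
Every axiom of `A ⋈ H` splits into an `A`-component and an `H`-component, each of which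
reduces to an axiom of `A` or `H` once the actions are pushed through products by the
matched-pair laws. Two facts about the actions drive this. They fix identities, because
their values there are idempotents, and an idempotent of a quasigroupoid is an identity.
They interact with inverses as `φA (λg) (φA g b) = b`, `φH (λg) (φA g b) = λ (φH g b)` and
`φA (φH g b) (λb) = λ (φA g b)`; the last two follow from uniqueness of one-sided inverses.
-/

/-- A quasigroupoid: objects `O`, arrows `A`, with a partial product `mul`
(meaningful on composable pairs, i.e. when `s a = t b`) and inverse map `inv`.
All axioms involving the product are guarded by composability hypotheses. -/
structure Quasigroupoid (O : Type*) (A : Type*) where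
  s : A → O
  t : A → O
  e : O → A
  inv : A → A
  mul : A → A → A
  s_e : ∀ x, s (e x) = x
  t_e : ∀ x, t (e x) = x
  e_mul : ∀ a, mul (e (t a)) a = a
  mul_e : ∀ a, mul a (e (s a)) = a
  s_mul : ∀ a b, s a = t b → s (mul a b) = s b
  t_mul : ∀ a b, s a = t b → t (mul a b) = t a
  inv_comp_left : ∀ a b, s a = t b → s (inv a) = t (mul a b)
  inv_mul_cancel : ∀ a b, s a = t b → mul (inv a) (mul a b) = b
  comp_inv_right : ∀ a b, s a = t b → s (mul a b) = t (inv b)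
  mul_inv_cancel : ∀ a b, s a = t b → mul (mul a b) (inv b) = a

/-- A matched pair of quasigroupoids with common base `O`:
a left action `φA` of `H` on `A` and a right action `φH` of `A` on `H`
satisfying the module conditions and the matched pair compatibilities. -/
structure IsMatchedPair {O A1 H1 : Type*} (A : Quasigroupoid O A1) (H : Quasigroupoid O H1)
    (φA : H1 → A1 → A1) (φH : H1 → A1 → H1) : Prop where
  t_act : ∀ h a, H.s h = A.t a → A.t (φA h a) = H.t h
  act_mul : ∀ g h a, H.s g = H.t h → H.s h = A.t a → φA (H.mul g h) a = φA g (φA h a)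
  act_id : ∀ a, φA (H.e (A.t a)) a = a
  s_act : ∀ h a, H.s h = A.t a → H.s (φH h a) = A.s a
  actH_mul : ∀ h a b, H.s h = A.t a → A.s a = A.t b → φH h (A.mul a b) = φH (φH h a) b
  actH_id : ∀ h, φH h (A.e (H.s h)) = h
  compat_st : ∀ h a, H.s h = A.t a → A.s (φA h a) = H.t (φH h a)
  compat_mulA : ∀ h a b, H.s h = A.t a → A.s a = A.t b →
    φA h (A.mul a b) = A.mul (φA h a) (φA (φH h a) b)
  compat_mulH : ∀ g h a, H.s g = H.t h → H.s h = A.t a →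
    φH (H.mul g h) a = H.mul (φH g (φA h a)) (φH h a)

namespace Quasigroupoid

variable {O A1 : Type*} (Q : Quasigroupoid O A1)

theorem s_inv (a : A1) : Q.s (Q.inv a) = Q.t a := by
  simpa only [Q.mul_e] using Q.inv_comp_left a (Q.e (Q.s a)) (Q.t_e _).symm

theorem t_inv (a : A1) : Q.t (Q.inv a) = Q.s a := by
  simpa only [Q.e_mul] using (Q.comp_inv_right (Q.e (Q.t a)) a (Q.s_e _)).symm

theorem inv_mul_self (a : A1) : Q.mul (Q.inv a) a = Q.e (Q.s a) := by
  simpa only [Q.mul_e] using Q.inv_mul_cancel a (Q.e (Q.s a)) (Q.t_e _).symm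

theorem mul_inv_self (a : A1) : Q.mul a (Q.inv a) = Q.e (Q.t a) := by
  simpa only [Q.e_mul] using Q.mul_inv_cancel (Q.e (Q.t a)) a (Q.s_e _)

theorem e_mul_e (x : O) : Q.mul (Q.e x) (Q.e x) = Q.e x := by
  simpa only [Q.t_e] using Q.e_mul (Q.e x)

theorem inv_inv (a : A1) : Q.inv (Q.inv a) = a := by
  have h := Q.inv_mul_cancel (Q.inv a) a (Q.s_inv a)
  rwa [Q.inv_mul_self, ← Q.t_inv a, ← Q.s_inv (Q.inv a), Q.mul_e] at h

theorem eq_inv_of_mul_eq_e_right {u w : A1} (hc : Q.s u = Q.t w)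
    (h : Q.mul u w = Q.e (Q.t u)) : w = Q.inv u := by
  have h' := Q.inv_mul_cancel u w hc
  rwa [h, ← Q.s_inv u, Q.mul_e, eq_comm] at h'

theorem eq_inv_of_mul_eq_e_left {u w : A1} (hc : Q.s u = Q.t w)
    (h : Q.mul u w = Q.e (Q.s w)) : u = Q.inv w := by
  have h' := Q.mul_inv_cancel u w hc
  rwa [h, ← Q.t_inv w, Q.e_mul, eq_comm] at h'

theorem eq_e_of_mul_self {u : A1} (hc : Q.s u = Q.t u) (h : Q.mul u u = u) :
    u = Q.e (Q.s u) := by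
  have h' := Q.inv_mul_cancel u u hc
  rwa [h, Q.inv_mul_self, eq_comm] at h'

end Quasigroupoid

theorem Quasigroupoid.s_inv_eq_t_inv {O A1 H1 : Type*} {A : Quasigroupoid O A1}
    {H : Quasigroupoid O H1} {a : A1} {g : H1} (hp : A.s a = H.t g) :
    H.s (H.inv g) = A.t (A.inv a) := by
  rw [H.s_inv, A.t_inv, hp]

section DoubleCross

variable {O A1 H1 : Type*} (A : Quasigroupoid O A1) (H : Quasigroupoid O H1)
  (φA : H1 → A1 → A1) (φH : H1 → A1 → H1)

def doubleCrossMul (p q : A1 × H1) : A1 × H1 :=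
  (A.mul p.1 (φA p.2 q.1), H.mul (φH p.2 q.1) q.2)

def doubleCrossInv (p : A1 × H1) : A1 × H1 :=
  (φA (H.inv p.2) (A.inv p.1), φH (H.inv p.2) (A.inv p.1))

end DoubleCross

namespace IsMatchedPair

variable {O A1 H1 : Type*} {A : Quasigroupoid O A1} {H : Quasigroupoid O H1}
  {φA : H1 → A1 → A1} {φH : H1 → A1 → H1} (hmp : IsMatchedPair A H φA φH)

include hmp

theorem actH_e (a : A1) : φH (H.e (A.t a)) a = H.e (A.s a) := by
  set u := φH (H.e (A.t a)) a
  have hse : H.s (H.e (A.t a)) = A.t a := H.s_e _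
  have hs : H.s u = A.s a := hmp.s_act _ _ hse
  have ht : H.t u = A.s a := by rw [← hmp.compat_st _ _ hse, hmp.act_id]
  have idem : H.mul u u = u := by
    have h := hmp.compat_mulH _ _ a (by rw [H.s_e, H.t_e]) hse
    rwa [H.e_mul_e, hmp.act_id, eq_comm] at h
  rw [H.eq_e_of_mul_self (hs.trans ht.symm) idem, hs]

theorem act_e (h : H1) : φA h (A.e (H.s h)) = A.e (H.t h) := by
  set v := φA h (A.e (H.s h))
  have hte : H.s h = A.t (A.e (H.s h)) := (A.t_e _).symm
  have ht : A.t v = H.t h := hmp.t_act _ _ hte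
  have hs : A.s v = H.t h := by rw [hmp.compat_st _ _ hte, hmp.actH_id]
  have idem : A.mul v v = v := by
    have h' := hmp.compat_mulA h _ _ hte (by rw [A.s_e, A.t_e])
    rwa [A.e_mul_e, hmp.actH_id, eq_comm] at h'
  rw [A.eq_e_of_mul_self (hs.trans ht.symm) idem, hs]

variable {a b : A1} {g h : H1}

theorem act_inv_act (hc : H.s g = A.t b) : φA (H.inv g) (φA g b) = b := by
  rw [← hmp.act_mul _ _ _ (H.s_inv g) hc, H.inv_mul_self, hc, hmp.act_id]

theorem actH_inv_act (hc : H.s g = A.t b) :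
    φH (H.inv g) (φA g b) = H.inv (φH g b) := by
  apply H.eq_inv_of_mul_eq_e_left
  · rw [hmp.s_act _ _ (by rw [H.s_inv, hmp.t_act g b hc]), hmp.compat_st g b hc]
  · rw [← hmp.compat_mulH _ _ _ (H.s_inv g) hc, H.inv_mul_self, hc, hmp.actH_e,
      hmp.s_act g b hc]

theorem act_actH_inv (hc : H.s g = A.t b) :
    φA (φH g b) (A.inv b) = A.inv (φA g b) := by
  apply A.eq_inv_of_mul_eq_e_right
  · rw [hmp.compat_st g b hc, hmp.t_act _ _ ((hmp.s_act g b hc).trans (A.t_inv b).symm)]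
  · rw [← hmp.compat_mulA g b (A.inv b) hc (A.t_inv b).symm, A.mul_inv_self, ← hc,
      hmp.act_e, hmp.t_act g b hc]

theorem s_fst_doubleCrossMul (hp : A.s a = H.t g) (hq : A.s b = H.t h) (hc : H.s g = A.t b) :
    A.s (doubleCrossMul A H φA φH (a, g) (b, h)).1 =
      H.t (doubleCrossMul A H φA φH (a, g) (b, h)).2 :=
  calc A.s (A.mul a (φA g b)) = A.s (φA g b) := A.s_mul _ _ (hp.trans (hmp.t_act g b hc).symm)
    _ = H.t (φH g b) := hmp.compat_st g b hc
    _ = H.t (H.mul (φH g b) h) := (H.t_mul _ _ ((hmp.s_act g b hc).trans hq)).symm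

theorem s_fst_doubleCrossInv (hp : A.s a = H.t g) :
    A.s (doubleCrossInv A H φA φH (a, g)).1 = H.t (doubleCrossInv A H φA φH (a, g)).2 :=
  hmp.compat_st _ _ (Quasigroupoid.s_inv_eq_t_inv hp)

theorem s_doubleCrossMul (hq : A.s b = H.t h) (hc : H.s g = A.t b) :
    H.s (doubleCrossMul A H φA φH (a, g) (b, h)).2 = H.s h :=
  H.s_mul _ _ ((hmp.s_act g b hc).trans hq)

theorem t_doubleCrossMul (hp : A.s a = H.t g) (hc : H.s g = A.t b) :
    A.t (doubleCrossMul A H φA φH (a, g) (b, h)).1 = A.t a :=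
  A.t_mul _ _ (hp.trans (hmp.t_act g b hc).symm)

theorem s_doubleCrossInv (hp : A.s a = H.t g) :
    H.s (doubleCrossInv A H φA φH (a, g)).2 = A.t a := by
  dsimp only [doubleCrossInv]
  rw [hmp.s_act _ _ (Quasigroupoid.s_inv_eq_t_inv hp), A.s_inv]

theorem t_doubleCrossInv (hp : A.s a = H.t g) :
    A.t (doubleCrossInv A H φA φH (a, g)).1 = H.s g := by
  dsimp only [doubleCrossInv]
  rw [hmp.t_act _ _ (Quasigroupoid.s_inv_eq_t_inv hp), H.t_inv]

theorem e_doubleCrossMul (hp : A.s a = H.t g) :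
    doubleCrossMul A H φA φH (A.e (A.t a), H.e (A.t a)) (a, g) = (a, g) := by
  rw [doubleCrossMul, hmp.act_id, A.e_mul, hmp.actH_e, hp, H.e_mul]

theorem doubleCrossMul_e (hp : A.s a = H.t g) :
    doubleCrossMul A H φA φH (a, g) (A.e (H.s g), H.e (H.s g)) = (a, g) := by
  rw [doubleCrossMul, hmp.act_e, ← hp, A.mul_e, hmp.actH_id, H.mul_e]

theorem doubleCrossInv_mul_cancel (hp : A.s a = H.t g) (hq : A.s b = H.t h)
    (hc : H.s g = A.t b) :
    doubleCrossMul A H φA φH (doubleCrossInv A H φA φH (a, g))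
      (doubleCrossMul A H φA φH (a, g) (b, h)) = (b, h) := by
  have hinv := Quasigroupoid.s_inv_eq_t_inv hp
  have hc' : A.s (A.inv a) = A.t (A.mul a (φA g b)) := by
    rw [A.s_inv, A.t_mul _ _ (hp.trans (hmp.t_act g b hc).symm)]
  have cancel : A.mul (A.inv a) (A.mul a (φA g b)) = φA g b :=
    A.inv_mul_cancel _ _ (hp.trans (hmp.t_act g b hc).symm)
  simp only [doubleCrossMul, doubleCrossInv, Prod.mk.injEq]
  constructor
  · rw [← hmp.compat_mulA _ _ _ hinv hc', cancel, hmp.act_inv_act hc]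
  · rw [← hmp.actH_mul _ _ _ hinv hc', cancel, hmp.actH_inv_act hc,
      H.inv_mul_cancel _ _ ((hmp.s_act g b hc).trans hq)]

theorem doubleCrossMul_inv_cancel (hp : A.s a = H.t g) (hq : A.s b = H.t h)
    (hc : H.s g = A.t b) :
    doubleCrossMul A H φA φH (doubleCrossMul A H φA φH (a, g) (b, h))
      (doubleCrossInv A H φA φH (b, h)) = (a, g) := by
  set x := φA (H.inv h) (A.inv b)
  have hinv := Quasigroupoid.s_inv_eq_t_inv hq
  have hx : H.s h = A.t x := by rw [hmp.t_act _ _ hinv, H.t_inv]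
  have hgb : H.s (φH g b) = H.t h := (hmp.s_act g b hc).trans hq
  have hb : A.s b = A.t (A.inv b) := (A.t_inv b).symm
  have act_x : φA h x = A.inv b := by simpa only [H.inv_inv] using hmp.act_inv_act hinv
  have actH_x : φH (H.inv h) (A.inv b) = H.inv (φH h x) := by
    rw [← H.inv_inv (φH (H.inv h) (A.inv b)), ← hmp.actH_inv_act hinv, H.inv_inv]
  simp only [doubleCrossMul, doubleCrossInv, Prod.mk.injEq]
  constructor
  · rw [hmp.act_mul _ _ _ hgb hx, act_x, hmp.act_actH_inv hc,
      A.mul_inv_cancel _ _ (hp.trans (hmp.t_act g b hc).symm)]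
  · have hM : H.s (φH (φH g b) (A.inv b)) = H.t (φH h x) := by
      rw [hmp.s_act _ _ ((hmp.s_act g b hc).trans hb), ← act_x, hmp.compat_st _ _ hx]
    rw [hmp.compat_mulH _ _ _ hgb hx, act_x, actH_x, H.mul_inv_cancel _ _ hM,
      ← hmp.actH_mul _ _ _ hc hb, A.mul_inv_self, ← hc, hmp.actH_id]

-- Off composable pairs the value `p` is arbitrary: no axiom constrains it there.
open Classical in
noncomputable def doubleCrossArrowMul (p q : {p : A1 × H1 // A.s p.1 = H.t p.2}) :
    {p : A1 × H1 // A.s p.1 = H.t p.2} :=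
  if hc : H.s p.1.2 = A.t q.1.1 then
    ⟨doubleCrossMul A H φA φH p.1 q.1, hmp.s_fst_doubleCrossMul p.2 q.2 hc⟩
  else p

theorem val_doubleCrossArrowMul {p q : {p : A1 × H1 // A.s p.1 = H.t p.2}}
    (hc : H.s p.1.2 = A.t q.1.1) :
    (hmp.doubleCrossArrowMul p q).1 = doubleCrossMul A H φA φH p.1 q.1 := by
  rw [doubleCrossArrowMul, dif_pos hc]

theorem s_doubleCrossArrowMul {p q : {p : A1 × H1 // A.s p.1 = H.t p.2}}
    (hc : H.s p.1.2 = A.t q.1.1) : H.s (hmp.doubleCrossArrowMul p q).1.2 = H.s q.1.2 := by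
  rw [hmp.val_doubleCrossArrowMul hc]
  exact hmp.s_doubleCrossMul q.2 hc

theorem t_doubleCrossArrowMul {p q : {p : A1 × H1 // A.s p.1 = H.t p.2}}
    (hc : H.s p.1.2 = A.t q.1.1) : A.t (hmp.doubleCrossArrowMul p q).1.1 = A.t p.1.1 := by
  rw [hmp.val_doubleCrossArrowMul hc]
  exact hmp.t_doubleCrossMul p.2 hc

noncomputable def doubleCross : Quasigroupoid O {p : A1 × H1 // A.s p.1 = H.t p.2} where
  s p := H.s p.1.2
  t p := A.t p.1.1
  e x := ⟨(A.e x, H.e x), by rw [A.s_e, H.t_e]⟩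
  inv p := ⟨doubleCrossInv A H φA φH p.1, hmp.s_fst_doubleCrossInv p.2⟩
  mul := hmp.doubleCrossArrowMul
  s_e := H.s_e
  t_e := A.t_e
  e_mul p := Subtype.ext <| by
    rw [hmp.val_doubleCrossArrowMul (H.s_e _)]
    exact hmp.e_doubleCrossMul p.2
  mul_e p := Subtype.ext <| by
    rw [hmp.val_doubleCrossArrowMul (A.t_e _).symm]
    exact hmp.doubleCrossMul_e p.2
  s_mul _ _ := hmp.s_doubleCrossArrowMul
  t_mul _ _ := hmp.t_doubleCrossArrowMul
  inv_comp_left p _ hc := (hmp.s_doubleCrossInv p.2).trans (hmp.t_doubleCrossArrowMul hc).symm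
  inv_mul_cancel p q hc := Subtype.ext <| by
    rw [hmp.val_doubleCrossArrowMul
      ((hmp.s_doubleCrossInv p.2).trans (hmp.t_doubleCrossArrowMul hc).symm),
      hmp.val_doubleCrossArrowMul hc]
    exact hmp.doubleCrossInv_mul_cancel p.2 q.2 hc
  comp_inv_right _ q hc := (hmp.s_doubleCrossArrowMul hc).trans (hmp.t_doubleCrossInv q.2).symm
  mul_inv_cancel p q hc := Subtype.ext <| by
    rw [hmp.val_doubleCrossArrowMul
      ((hmp.s_doubleCrossArrowMul hc).trans (hmp.t_doubleCrossInv q.2).symm),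
      hmp.val_doubleCrossArrowMul hc]
    exact hmp.doubleCrossMul_inv_cancel p.2 q.2 hc

end IsMatchedPair

/-- The double cross product `A ⋈ H` of a matched pair of quasigroupoids is a
quasigroupoid: objects `O`, arrows the pairs `(a,h)` with `s_A a = t_H h`,
source `(a,h) ↦ s_H h`, target `(a,h) ↦ t_A a`, identities `x ↦ (id_A x, id_H x)`,
product `(a,g)·(b,h) = (a • φA(g,b), φH(g,b) ⋆ h)` on composable pairs, and
inverse `(a,h) ↦ (φA(λ_H h, λ_A a), φH(λ_H h, λ_A a))`. -/
theorem doubleCrossProduct_quasigroupoid {O A1 H1 : Type*}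
    (A : Quasigroupoid O A1) (H : Quasigroupoid O H1)
    (φA : H1 → A1 → A1) (φH : H1 → A1 → H1)
    (hmp : IsMatchedPair A H φA φH) :
    ∃ D : Quasigroupoid O {p : A1 × H1 // A.s p.1 = H.t p.2},
      (∀ p, D.s p = H.s p.val.2) ∧
      (∀ p, D.t p = A.t p.val.1) ∧
      (∀ x, (D.e x).val = (A.e x, H.e x)) ∧
      (∀ p, (D.inv p).val =
        (φA (H.inv p.val.2) (A.inv p.val.1), φH (H.inv p.val.2) (A.inv p.val.1))) ∧
      (∀ p q, H.s p.val.2 = A.t q.val.1 →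
        (D.mul p q).val =
          (A.mul p.val.1 (φA p.val.2 q.val.1), H.mul (φH p.val.2 q.val.1) q.val.2)) :=
  ⟨hmp.doubleCross, fun _ => rfl, fun _ => rfl, fun _ => rfl, fun _ => rfl,
    fun _ _ hc => hmp.val_doubleCrossArrowMul hc⟩
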